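/- Let 𝔣 be a finite-dimensional real simple Lie algebra with negative definite Killing form, and let n ≥ 1. Let 𝔤 be the direct sum of n+1 copies of 𝔣, with componentwise Lie bracket. Suppose 𝔪 is a nonzero linear subspace of 𝔤 such that for every Z ∈ 𝔣 and every (Y₁,…,Y_{n+1}) ∈ 𝔪 the element ([Z,Y₁],…,[Z,Y_{n+1}]) lies in 𝔪 (invariance under the diagonal adjoint action), and such that 𝔪 contains no such invariant subspace other than 0 and 𝔪 itself (irreducibility). Then there exist real numbers α₁,…,α_{n+1} such that 𝔪 = {(α₁X, α₂X, …, α_{n+1}X) : X ∈ 𝔣}. -/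

import Mathlib

/-!
Pick `y₀ ∈ 𝔪` and a coordinate `i` with `y₀ i ≠ 0`. Evaluation at `i` is injective on `𝔪`, since
its kernel is an invariant subspace missing `y₀`, and surjective, since its image is a nonzero
ideal of the simple algebra `𝔣`. Hence `𝔪` is the graph of the maps `ψ j = ev j ∘ (ev i)⁻¹`,
which commute with `ad`. Such a map is self-adjoint for the Killing form, so definiteness gives it
a real eigenvalue, and its eigenspace is a nonzero ideal: `ψ j` is a scalar.
-/

open LieAlgebra

theorem LinearMap.BilinForm.exists_hasEigenvalue_of_isAdjointPair {V : Type*} [AddCommGroup V]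
    [Module ℝ V] [FiniteDimensional ℝ V] [Nontrivial V] {B : LinearMap.BilinForm ℝ V}
    (hB : B.IsSymm) (hpos : ∀ x ≠ 0, 0 < B x x) {φ : Module.End ℝ V}
    (hφ : B.IsAdjointPair B φ φ) : ∃ μ, φ.HasEigenvalue μ := by
  let core : InnerProductSpace.Core ℝ V :=
    { inner := fun x y => B x y
      conj_inner_symm := fun x y => hB.eq y x
      re_inner_nonneg := fun x => by
        rcases eq_or_ne x 0 with rfl | hx
        · simp
        · exact (hpos x hx).le
      add_left := fun x y z => by simp
      smul_left := fun x y r => by simp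
      definite := fun x hx => by
        by_contra h
        exact (hpos x h).ne' hx }
  let _ : NormedAddCommGroup V := core.toNormedAddCommGroup
  let _ : InnerProductSpace ℝ V := InnerProductSpace.ofCore core.toCore
  exact ⟨_, LinearMap.IsSymmetric.hasEigenvalue_iSup_of_finiteDimensional (T := φ) hφ⟩

namespace LieModuleHom

variable {R L M : Type*} [CommRing R] [LieRing L] [LieAlgebra R L] [AddCommGroup M] [Module R M]
  [LieRingModule L M] [LieModule R L M]

def eigenspace (f : M →ₗ⁅R,L⁆ M) (μ : R) : LieSubmodule R L M where
  toSubmodule := Module.End.eigenspace (f : Module.End R M) μ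
  lie_mem {x m} hm := by
    have hfm : f m = μ • m := Module.End.mem_eigenspace_iff.mp hm
    exact Module.End.mem_eigenspace_iff.mpr (by simp [hfm])

theorem eq_smul_of_hasEigenvalue [LieModule.IsIrreducible R L M] (f : M →ₗ⁅R,L⁆ M) {μ : R}
    (hμ : Module.End.HasEigenvalue (f : Module.End R M) μ) (m : M) : f m = μ • m := by
  have hne : f.eigenspace μ ≠ ⊥ := fun h => hμ ((LieSubmodule.toSubmodule_eq_bot (N := f.eigenspace μ)).mpr h)
  have htop := (eq_bot_or_eq_top (f.eigenspace μ)).resolve_left hne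
  exact Module.End.mem_eigenspace_iff.mp (htop ▸ LieSubmodule.mem_top m : m ∈ f.eigenspace μ)

end LieModuleHom

namespace LieAlgebra

variable {R L : Type*} [CommRing R] [LieRing L] [LieAlgebra R L]

theorem ad_map_eq_comp_ad (f : L →ₗ⁅R,L⁆ L) (x : L) :
    ad R L (f x) = (f : L →ₗ[R] L) ∘ₗ ad R L x := by
  ext y
  change ⁅f x, y⁆ = f ⁅x, y⁆
  rw [← lie_skew, ← f.map_lie, ← map_neg, lie_skew]

theorem ad_comp_lieModuleHom (f : L →ₗ⁅R,L⁆ L) (x : L) :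
    ad R L x ∘ₗ (f : L →ₗ[R] L) = (f : L →ₗ[R] L) ∘ₗ ad R L x := by
  ext y
  simp

theorem killingForm_isAdjointPair [Module.Free R L] [Module.Finite R L] (f : L →ₗ⁅R,L⁆ L) :
    (killingForm R L).IsAdjointPair (killingForm R L) f f := fun x y => by
  rw [killingForm_apply_apply, killingForm_apply_apply, ad_map_eq_comp_ad, ad_map_eq_comp_ad,
    LinearMap.comp_assoc, ← LinearMap.comp_assoc _ _ (ad R L x), ad_comp_lieModuleHom]
  rfl

end LieAlgebra

theorem LieAlgebra.IsSimple.exists_eq_smul_of_killingForm_neg {L : Type*} [LieRing L]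
    [LieAlgebra ℝ L] [FiniteDimensional ℝ L] [IsSimple ℝ L]
    (hneg : ∀ x : L, x ≠ 0 → killingForm ℝ L x x < 0) (f : L →ₗ⁅ℝ,L⁆ L) :
    ∃ a : ℝ, ∀ x, f x = a • x := by
  have := IsSimple.nontrivial ℝ L
  obtain ⟨μ, hμ⟩ := LinearMap.BilinForm.exists_hasEigenvalue_of_isAdjointPair
    (B := -killingForm ℝ L) (φ := f) ⟨fun x y => by simp [LieModule.traceForm_comm ℝ L L x y]⟩
    (fun x hx => neg_pos.mpr (hneg x hx))
    (fun x y => by simp [killingForm_isAdjointPair f x y])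
  exact ⟨μ, f.eq_smul_of_hasEigenvalue hμ⟩

namespace Submodule

variable {R L ι : Type*} [CommRing R] [LieRing L] [LieAlgebra R L] {𝔪 : Submodule R (ι → L)}

def IsDiagAdInvariant (𝔪 : Submodule R (ι → L)) : Prop :=
  ∀ Z : L, ∀ Y ∈ 𝔪, (fun i => ⁅Z, Y i⁆) ∈ 𝔪

def IsDiagAdInvariant.mapProj (hinv : 𝔪.IsDiagAdInvariant) (i : ι) : LieIdeal R L where
  toSubmodule := 𝔪.map (LinearMap.proj i)
  lie_mem := by
    rintro Z - ⟨Y, hY, rfl⟩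
    exact ⟨_, hinv Z Y hY, rfl⟩

theorem IsDiagAdInvariant.inf_ker_proj (hinv : 𝔪.IsDiagAdInvariant) (i : ι) :
    (𝔪 ⊓ LinearMap.ker (LinearMap.proj i)).IsDiagAdInvariant := fun Z Y hY =>
  ⟨hinv Z Y hY.1, show ⁅Z, Y i⁆ = 0 by rw [show Y i = 0 from hY.2, lie_zero]⟩

theorem bijective_proj_comp_subtype [IsSimple R L] (hinv : 𝔪.IsDiagAdInvariant)
    (hirr : ∀ 𝔫 ≤ 𝔪, 𝔫.IsDiagAdInvariant → 𝔫 = ⊥ ∨ 𝔫 = 𝔪)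
    {i : ι} {y₀ : ι → L} (hy₀ : y₀ ∈ 𝔪) (hi : y₀ i ≠ 0) :
    Function.Bijective ((LinearMap.proj i).comp 𝔪.subtype) := by
  refine ⟨(injective_iff_map_eq_zero _).mpr fun y hyi => ?_, fun X => ?_⟩
  · rcases hirr _ inf_le_left (hinv.inf_ker_proj i) with h | h
    · have hy : (y : ι → L) ∈ 𝔪 ⊓ LinearMap.ker (LinearMap.proj i) := ⟨y.2, hyi⟩
      rwa [h, mem_bot, coe_eq_zero] at hy
    · exact absurd (h.ge hy₀).2 hi
  · have hne : hinv.mapProj i ≠ ⊥ := fun h => hi <| by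
      have : y₀ i ∈ hinv.mapProj i := ⟨y₀, hy₀, rfl⟩
      rwa [h, LieSubmodule.mem_bot] at this
    have hX : X ∈ hinv.mapProj i := by
      rw [(IsSimple.eq_bot_or_eq_top _).resolve_left hne]
      exact LieSubmodule.mem_top X
    obtain ⟨y, hy, rfl⟩ := hX
    exact ⟨⟨y, hy⟩, rfl⟩

theorem exists_lieModuleHom_eq_range_of_bijective (hinv : 𝔪.IsDiagAdInvariant) {i : ι}
    (hbij : Function.Bijective ((LinearMap.proj i).comp 𝔪.subtype)) :
    ∃ ψ : ι → (L →ₗ⁅R,L⁆ L), (𝔪 : Set (ι → L)) = Set.range fun X j => ψ j X := by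
  let e : 𝔪 ≃ₗ[R] L := LinearEquiv.ofBijective _ hbij
  have he : ∀ Z X : L, (e.symm ⁅Z, X⁆ : ι → L) = fun j => ⁅Z, (e.symm X : ι → L) j⁆ := by
    intro Z X
    have hX : (e.symm X : ι → L) i = X := e.apply_symm_apply X
    have : e.symm ⁅Z, X⁆ = ⟨_, hinv Z _ (e.symm X).2⟩ := by
      rw [e.symm_apply_eq]
      change ⁅Z, X⁆ = ⁅Z, (e.symm X : ι → L) i⁆
      rw [hX]
    rw [this]
  refine ⟨fun j => { LinearMap.proj j ∘ₗ 𝔪.subtype ∘ₗ e.symm.toLinearMap with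
    map_lie' := fun {Z X} => congrFun (he Z X) j }, ?_⟩
  ext y
  constructor
  · intro hy
    refine ⟨e ⟨y, hy⟩, funext fun j => ?_⟩
    change (e.symm (e ⟨y, hy⟩) : ι → L) j = y j
    rw [e.symm_apply_apply]
  · rintro ⟨X, rfl⟩
    exact (e.symm X).2

theorem exists_lieModuleHom_eq_range [IsSimple R L] (hinv : 𝔪.IsDiagAdInvariant)
    (hirr : ∀ 𝔫 ≤ 𝔪, 𝔫.IsDiagAdInvariant → 𝔫 = ⊥ ∨ 𝔫 = 𝔪) (h𝔪 : 𝔪 ≠ ⊥) :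
    ∃ ψ : ι → (L →ₗ⁅R,L⁆ L), (𝔪 : Set (ι → L)) = Set.range fun X j => ψ j X := by
  obtain ⟨y₀, hy₀, hy₀ne⟩ := exists_mem_ne_zero_of_ne_bot h𝔪
  obtain ⟨i, hi⟩ := Function.ne_iff.mp hy₀ne
  exact exists_lieModuleHom_eq_range_of_bijective hinv
    (bijective_proj_comp_subtype hinv hirr hy₀ hi)

end Submodule

theorem stmt_1_general (𝔣 : Type*) [LieRing 𝔣] [LieAlgebra ℝ 𝔣] [FiniteDimensional ℝ 𝔣]
    (hsimple : LieAlgebra.IsSimple ℝ 𝔣)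
    (hneg : ∀ X : 𝔣, X ≠ 0 → killingForm ℝ 𝔣 X X < 0)
    (n : ℕ)
    (𝔪 : Submodule ℝ (Fin (n + 1) → 𝔣)) (h𝔪ne : 𝔪 ≠ ⊥)
    (hinv : ∀ Z : 𝔣, ∀ Y ∈ 𝔪, (fun i => ⁅Z, Y i⁆) ∈ 𝔪)
    (hirr : ∀ 𝔫 : Submodule ℝ (Fin (n + 1) → 𝔣), 𝔫 ≤ 𝔪 →
      (∀ Z : 𝔣, ∀ Y ∈ 𝔫, (fun i => ⁅Z, Y i⁆) ∈ 𝔫) → 𝔫 = ⊥ ∨ 𝔫 = 𝔪) :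
    ∃ α : Fin (n + 1) → ℝ,
      (𝔪 : Set (Fin (n + 1) → 𝔣)) = {y | ∃ X : 𝔣, y = fun i => α i • X} := by
  obtain ⟨ψ, hψ⟩ := 𝔪.exists_lieModuleHom_eq_range hinv hirr h𝔪ne
  choose α hα using fun j => hsimple.exists_eq_smul_of_killingForm_neg hneg (ψ j)
  refine ⟨α, hψ.trans ?_⟩
  ext y
  simp [hα, eq_comm]

/-- Every nonzero irreducible subspace of 𝔣^{n+1} invariant under the
diagonal adjoint action is of the form {(α₁X, …, α_{n+1}X) : X ∈ 𝔣}. -/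
theorem stmt_1 (𝔣 : Type*) [LieRing 𝔣] [LieAlgebra ℝ 𝔣] [FiniteDimensional ℝ 𝔣]
    (hsimple : LieAlgebra.IsSimple ℝ 𝔣)
    (hneg : ∀ X : 𝔣, X ≠ 0 → killingForm ℝ 𝔣 X X < 0)
    (n : ℕ) (hn : 1 ≤ n)
    (𝔪 : Submodule ℝ (Fin (n + 1) → 𝔣)) (h𝔪ne : 𝔪 ≠ ⊥)
    (hinv : ∀ Z : 𝔣, ∀ Y ∈ 𝔪, (fun i => ⁅Z, Y i⁆) ∈ 𝔪)
    (hirr : ∀ 𝔫 : Submodule ℝ (Fin (n + 1) → 𝔣), 𝔫 ≤ 𝔪 →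
      (∀ Z : 𝔣, ∀ Y ∈ 𝔫, (fun i => ⁅Z, Y i⁆) ∈ 𝔫) → 𝔫 = ⊥ ∨ 𝔫 = 𝔪) :
    ∃ α : Fin (n + 1) → ℝ,
      (𝔪 : Set (Fin (n + 1) → 𝔣)) = {y | ∃ X : 𝔣, y = fun i => α i • X} :=
  stmt_1_general 𝔣 hsimple hneg n 𝔪 h𝔪ne hinv hirr
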